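/- The Markov–Pell polynomials satisfy the saturation property: for every k ≥ 1, writing R_{2k+1} = Σ A_{i,j} x^{2i} y^{2j} z^{2(2k−i−j)} with integer coefficients A_{i,j} (i, j ≥ 0, i + j ≤ 2k), one has A_{i,j} > 0 if and only if (k+1)·i + k·j ≥ k·(k+1) (equivalently i/k + j/(k+1) ≥ 1); that is, the nonzero coefficients are exactly those at the lattice points of the Newton polygon of the numerator of M_{k/(k+1)}. -/
import Mathlib


open MvPolynomial

/-- The Markov–Pell polynomials `R n ∈ ℤ[x,y,z]` (with `x = X 0`, `y = X 1`, `z = X 2`),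
defined by `R 0 = 0`, `R 1 = 1`, and for `k ≥ 1`,
`R (2k) = (x²+y²)·R (2k-1) + y²z²·R (2k-2)` and
`R (2k+1) = (x²+y²)·R (2k) + x²z²·R (2k-1)`.
(Here `n + 2` is even iff `n` is even, whence the choice of `y` or `x` below.) -/
noncomputable def pellR : ℕ → MvPolynomial (Fin 3) ℤ
  | 0 => 0
  | 1 => 1
  | (n + 2) => (X 0 ^ 2 + X 1 ^ 2) * pellR (n + 1)
      + (if n % 2 = 0 then X 1 else X 0) ^ 2 * X 2 ^ 2 * pellR n


noncomputable def pellN : ℕ → MvPolynomial (Fin 3) ℕ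
  | 0 => 0
  | 1 => 1
  | (n + 2) => (X 0 ^ 2 + X 1 ^ 2) * pellN (n + 1)
      + (if n % 2 = 0 then X 1 else X 0) ^ 2 * X 2 ^ 2 * pellN n

lemma pellR_eq_map : ∀ n, pellR n = MvPolynomial.map (Nat.castRingHom ℤ) (pellN n)
  | 0 => by simp [pellR, pellN]
  | 1 => by simp [pellR, pellN]
  | (n + 2) => by
      rw [pellR, pellN, pellR_eq_map (n+1), pellR_eq_map n]
      split_ifs <;> simp [map_add, map_mul, map_pow]

noncomputable def mon (i j l : ℕ) : Fin 3 →₀ ℕ :=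
  Finsupp.single 0 (2*i) + Finsupp.single 1 (2*j) + Finsupp.single 2 (2*l)

lemma mon_sub (i j l : ℕ) (s : Fin 3) :
    (s = 0 → 1 ≤ i → mon i j l - Finsupp.single s 2 = mon (i-1) j l) ∧
    (s = 1 → 1 ≤ j → mon i j l - Finsupp.single s 2 = mon i (j-1) l) ∧
    (s = 2 → 1 ≤ l → mon i j l - Finsupp.single s 2 = mon i j (l-1)) := by
  refine ⟨?_, ?_, ?_⟩ <;> rintro rfl h <;> ext a <;> fin_cases a <;>
    simp [mon, Finsupp.single_apply] <;> omega

lemma coeff_Xsq_mul (s : Fin 3) (p : MvPolynomial (Fin 3) ℕ) (m : Fin 3 →₀ ℕ) :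
    coeff m (X s ^ 2 * p) = if 2 ≤ m s then coeff (m - Finsupp.single s 2) p else 0 := by
  rw [X_pow_eq_monomial, coeff_monomial_mul']
  simp [Finsupp.single_le_iff]

lemma mon_apply (i j l : ℕ) : mon i j l 0 = 2*i ∧ mon i j l 1 = 2*j ∧ mon i j l 2 = 2*l := by
  refine ⟨?_, ?_, ?_⟩ <;> simp [mon, Finsupp.single_apply]

/-- coeff of `x^{2i} y^{2j} z^{2l}` in `R_{2k+1}` with `l = 2k - i - j`. -/
noncomputable def A (k i j : ℕ) : ℕ := coeff (mon i j (2*k - i - j)) (pellN (2*k+1))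
/-- coeff of `x^{2i} y^{2j} z^{2l}` in `R_{2k}` with `l = 2k - 1 - i - j`. -/
noncomputable def B (k i j : ℕ) : ℕ := coeff (mon i j (2*k - 1 - i - j)) (pellN (2*k))

lemma mon_congr {i j l i' j' l' : ℕ} (h1 : i = i') (h2 : j = j') (h3 : l = l') :
    mon i j l = mon i' j' l' := by subst h1; subst h2; subst h3; rfl

lemma mon_sub_apply2 (i j l : ℕ) : (mon i j l - Finsupp.single 0 2 : Fin 3 →₀ ℕ) 2 = 2*l := by
  simp [mon, Finsupp.single_apply]

lemma mon_sub_apply2' (i j l : ℕ) : (mon i j l - Finsupp.single 1 2 : Fin 3 →₀ ℕ) 2 = 2*l := by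
  simp [mon, Finsupp.single_apply]

lemma recA (k i j : ℕ) (hk : 1 ≤ k) (h : i + j ≤ 2*k) :
    A k i j = (if 1 ≤ i then B k (i-1) j else 0) + (if 1 ≤ j then B k i (j-1) else 0)
      + (if 1 ≤ i ∧ i + j ≤ 2*k - 1 then A (k-1) (i-1) j else 0) := by
  have e1 : 2*k + 1 = (2*k - 1) + 2 := by omega
  have e2 : (2*k - 1) % 2 = 1 := by omega
  rw [A, e1, pellN, e2, if_neg (by norm_num)]
  simp only [add_mul, coeff_add]
  rw [mul_assoc, coeff_Xsq_mul, coeff_Xsq_mul, coeff_Xsq_mul, coeff_Xsq_mul]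
  rw [(mon_apply _ _ _).1, (mon_apply _ _ _).2.1, mon_sub_apply2,
    show (2*k - 1 + 1) = 2*k from by omega]
  have hB0 : ∀ _ : 1 ≤ i, MvPolynomial.coeff (mon i j (2*k-i-j) - Finsupp.single 0 2)
      (pellN (2*k)) = B k (i-1) j := fun hi => by
    rw [(mon_sub i j _ 0).1 rfl hi, B,
      mon_congr (rfl : i-1 = i-1) (rfl : j = j) (show 2*k-i-j = 2*k-1-(i-1)-j from by omega)]
  have hB1 : ∀ _ : 1 ≤ j, MvPolynomial.coeff (mon i j (2*k-i-j) - Finsupp.single 1 2)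
      (pellN (2*k)) = B k i (j-1) := fun hj => by
    rw [(mon_sub i j _ 1).2.1 rfl hj, B,
      mon_congr (rfl : i = i) (rfl : j-1 = j-1) (show 2*k-i-j = 2*k-1-i-(j-1) from by omega)]
  have hA2 : ∀ _ : 1 ≤ i, ∀ _ : i + j ≤ 2*k-1,
      MvPolynomial.coeff ((mon i j (2*k-i-j) - Finsupp.single 0 2) - Finsupp.single 2 2)
      (pellN (2*k-1)) = A (k-1) (i-1) j := fun hi hr => by
    rw [(mon_sub i j _ 0).1 rfl hi, (mon_sub (i-1) j _ 2).2.2 rfl (by omega),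
      show 2*k-1 = 2*(k-1)+1 from by omega, A,
      mon_congr (rfl : i-1 = i-1) (rfl : j = j)
        (show 2*k-i-j-1 = 2*(k-1)-(i-1)-j from by omega)]
  split_ifs with h1 h2 h3 h4 h5 h6 h7 h8 h9 h10 h11 <;> try omega
  all_goals
    refine congrArg₂ (·+·) (congrArg₂ (·+·) ?_ ?_) ?_ <;>
      first
        | rfl
        | (exact hB0 (by omega))
        | (exact hB1 (by omega))
        | (exact hA2 (by omega) (by omega))

lemma recB (k i j : ℕ) (hk : 1 ≤ k) (h : i + j ≤ 2*k - 1) :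
    B k i j = (if 1 ≤ i then A (k-1) (i-1) j else 0) + (if 1 ≤ j then A (k-1) i (j-1) else 0)
      + (if 1 ≤ j ∧ i + j ≤ 2*k - 2 then B (k-1) i (j-1) else 0) := by
  have e1 : 2*k = (2*k - 2) + 2 := by omega
  have e2 : (2*k - 2) % 2 = 0 := by omega
  have ep : pellN (2*k) = (X 0^2 + X 1^2) * pellN (2*k-1) + X 1^2 * X 2^2 * pellN (2*k-2) := by
    rw [e1, pellN, e2, if_pos rfl]
    simp only [show 2*k-2+2-1 = 2*k-1 from by omega, show 2*k-2+2-2 = 2*k-2 from by omega,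
      show 2*k-2+1 = 2*k-1 from by omega]
  rw [B, ep]
  simp only [add_mul, coeff_add]
  rw [mul_assoc, coeff_Xsq_mul, coeff_Xsq_mul, coeff_Xsq_mul, coeff_Xsq_mul]
  rw [(mon_apply _ _ _).1, (mon_apply _ _ _).2.1, mon_sub_apply2']
  have hA0 : ∀ _ : 1 ≤ i, MvPolynomial.coeff (mon i j (2*k-1-i-j) - Finsupp.single 0 2)
      (pellN (2*k-1)) = A (k-1) (i-1) j := fun hi => by
    rw [(mon_sub i j _ 0).1 rfl hi,
      mon_congr (rfl : i-1 = i-1) (rfl : j = j)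
        (show 2*k-1-i-j = 2*(k-1)-(i-1)-j from by omega),
      show 2*k-1 = 2*(k-1)+1 from by omega, A]
  have hA1 : ∀ _ : 1 ≤ j, MvPolynomial.coeff (mon i j (2*k-1-i-j) - Finsupp.single 1 2)
      (pellN (2*k-1)) = A (k-1) i (j-1) := fun hj => by
    rw [(mon_sub i j _ 1).2.1 rfl hj,
      mon_congr (rfl : i = i) (rfl : j-1 = j-1)
        (show 2*k-1-i-j = 2*(k-1)-i-(j-1) from by omega),
      show 2*k-1 = 2*(k-1)+1 from by omega, A]
  have hB2 : ∀ _ : 1 ≤ j, ∀ _ : i + j ≤ 2*k-2,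
      MvPolynomial.coeff ((mon i j (2*k-1-i-j) - Finsupp.single 1 2) - Finsupp.single 2 2)
      (pellN (2*k-2)) = B (k-1) i (j-1) := fun hj hr => by
    rw [(mon_sub i j _ 1).2.1 rfl hj, (mon_sub i (j-1) _ 2).2.2 rfl (by omega),
      show 2*k-2 = 2*(k-1) from by omega, B,
      mon_congr (rfl : i = i) (rfl : j-1 = j-1)
        (show 2*k-1-i-j-1 = 2*(k-1)-1-i-(j-1) from by omega)]
  split_ifs with h1 h2 h3 h4 h5 h6 h7 h8 h9 h10 h11 <;> try omega
  all_goals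
    refine congrArg₂ (·+·) (congrArg₂ (·+·) ?_ ?_) ?_ <;>
      first
        | rfl
        | (exact hA0 (by omega))
        | (exact hA1 (by omega))
        | (exact hB2 (by omega) (by omega))


lemma sum3_ne_zero (a b c : ℕ) : a + b + c ≠ 0 ↔ (a ≠ 0 ∨ b ≠ 0 ∨ c ≠ 0) := by omega

lemma AB_char : ∀ k : ℕ,
    (∀ i j, i + j ≤ 2*k → (A k i j ≠ 0 ↔ k*(k+1) ≤ (k+1)*i + k*j)) ∧
    (1 ≤ k → ∀ i j, i + j ≤ 2*k - 1 → (B k i j ≠ 0 ↔ k ≤ i + j)) := by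
  intro k
  induction k with
  | zero =>
    refine ⟨?_, by omega⟩
    intro i j hij
    have hi : i = 0 := by omega
    have hj : j = 0 := by omega
    subst hi; subst hj
    have hA : A 0 0 0 = 1 := by
      rw [A, show 2*0+1 = 0+1 from rfl, pellN]
      have : mon 0 0 (2*0-0-0) = 0 := by
        ext a; fin_cases a <;> simp [mon]
      rw [this]
      simp
    simp [hA]
  | succ k ih =>
    obtain ⟨ihA, ihB⟩ := ih
    have hB : ∀ i j, i + j ≤ 2*(k+1) - 1 → (B (k+1) i j ≠ 0 ↔ k+1 ≤ i + j) := by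
      intro i j hij
      rw [recB (k+1) i j (by omega) hij]
      simp only [Nat.add_sub_cancel]
      have h1 : ((if 1 ≤ i then A k (i-1) j else 0) ≠ 0) ↔
          (1 ≤ i ∧ k*(k+1) ≤ (k+1)*(i-1) + k*j) := by
        split_ifs with hi
        · rw [ihA (i-1) j (by omega)]; simp [hi]
        · simp [hi]
      have h2 : ((if 1 ≤ j then A k i (j-1) else 0) ≠ 0) ↔
          (1 ≤ j ∧ k*(k+1) ≤ (k+1)*i + k*(j-1)) := by
        split_ifs with hj
        · rw [ihA i (j-1) (by omega)]; simp [hj]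
        · simp [hj]
      have h3 : ((if 1 ≤ j ∧ i + j ≤ 2*(k+1) - 2 then B k i (j-1) else 0) ≠ 0) ↔
          (1 ≤ j ∧ i + j ≤ 2*k ∧ k ≤ i + (j-1)) := by
        split_ifs with hc
        · rcases Nat.eq_zero_or_pos k with rfl | hk1
          · exact absurd hc (by omega)
          · rw [ihB hk1 i (j-1) (by omega)]
            exact ⟨fun hh => ⟨hc.1, by omega, hh⟩, fun hh => hh.2.2⟩
        · have hn : ¬(1 ≤ j ∧ i + j ≤ 2*k ∧ k ≤ i + (j-1)) := fun hh => hc ⟨hh.1, by omega⟩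
          simp [hn]
      rw [sum3_ne_zero, h1, h2, h3]
      constructor
      · rintro (⟨hi, hle⟩ | ⟨hj, hle⟩ | ⟨hj, hr, hle⟩)
        · obtain ⟨i', rfl⟩ : ∃ i', i = i'+1 := ⟨i-1, by omega⟩
          simp only [Nat.add_sub_cancel] at hle
          nlinarith
        · obtain ⟨j', rfl⟩ : ∃ j', j = j'+1 := ⟨j-1, by omega⟩
          simp only [Nat.add_sub_cancel] at hle
          nlinarith
        · omega
      · intro hle
        by_cases hj : 1 ≤ j
        · by_cases hr : i + j ≤ 2*k
          · exact Or.inr (Or.inr ⟨hj, hr, by omega⟩)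
          · refine Or.inr (Or.inl ⟨hj, ?_⟩)
            obtain ⟨j', rfl⟩ : ∃ j', j = j'+1 := ⟨j-1, by omega⟩
            simp only [Nat.add_sub_cancel]
            have h2 : k * (i + j') = k * (2*k) := by rw [show i + j' = 2*k from by omega]
            rcases Nat.eq_zero_or_pos k with rfl | hk
            · simp
            · nlinarith [h2, Nat.le_mul_of_pos_left k hk]
        · refine Or.inl ⟨by omega, ?_⟩
          obtain ⟨i', rfl⟩ : ∃ i', i = i'+1 := ⟨i-1, by omega⟩
          simp only [Nat.add_sub_cancel]
          have hki : k ≤ i' := by omega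
          nlinarith [Nat.mul_le_mul_left (k+1) hki]
    refine ⟨?_, fun _ => hB⟩
    intro i j hij
    rw [recA (k+1) i j (by omega) hij]
    simp only [Nat.add_sub_cancel]
    have h1 : ((if 1 ≤ i then B (k+1) (i-1) j else 0) ≠ 0) ↔
        (1 ≤ i ∧ k+1 ≤ (i-1) + j) := by
      split_ifs with hi
      · rw [hB (i-1) j (by omega)]; simp [hi]
      · simp [hi]
    have h2 : ((if 1 ≤ j then B (k+1) i (j-1) else 0) ≠ 0) ↔
        (1 ≤ j ∧ k+1 ≤ i + (j-1)) := by
      split_ifs with hj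
      · rw [hB i (j-1) (by omega)]; simp [hj]
      · simp [hj]
    have h3 : ((if 1 ≤ i ∧ i + j ≤ 2*(k+1) - 1 then A k (i-1) j else 0) ≠ 0) ↔
        (1 ≤ i ∧ i + j ≤ 2*k+1 ∧ k*(k+1) ≤ (k+1)*(i-1) + k*j) := by
      split_ifs with hc
      · rw [ihA (i-1) j (by omega)]
        exact ⟨fun hh => ⟨hc.1, by omega, hh⟩, fun hh => hh.2.2⟩
      · have hn : ¬(1 ≤ i ∧ i + j ≤ 2*k+1 ∧ k*(k+1) ≤ (k+1)*(i-1) + k*j) :=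
          fun hh => hc ⟨hh.1, by omega⟩
        simp [hn]
    rw [sum3_ne_zero, h1, h2, h3]
    constructor
    · rintro (⟨hi, hle⟩ | ⟨hj, hle⟩ | ⟨hi, hr, hle⟩)
      · obtain ⟨i', rfl⟩ : ∃ i', i = i'+1 := ⟨i-1, by omega⟩
        simp only [Nat.add_sub_cancel] at hle ⊢
        nlinarith [Nat.mul_le_mul_left (k+1) hle]
      · obtain ⟨j', rfl⟩ : ∃ j', j = j'+1 := ⟨j-1, by omega⟩
        simp only [Nat.add_sub_cancel] at hle ⊢
        nlinarith [Nat.mul_le_mul_left (k+1) hle]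
      · obtain ⟨i', rfl⟩ : ∃ i', i = i'+1 := ⟨i-1, by omega⟩
        simp only [Nat.add_sub_cancel] at hle ⊢
        nlinarith
    · intro hle
      by_cases hc : k+2 ≤ i + j
      · by_cases hj : 1 ≤ j
        · exact Or.inr (Or.inl ⟨hj, by omega⟩)
        · exact Or.inl ⟨by omega, by omega⟩
      · have hik : i = k+1 ∧ j = 0 := by constructor <;> nlinarith
        obtain ⟨rfl, rfl⟩ := hik
        refine Or.inr (Or.inr ⟨by omega, by omega, ?_⟩)
        simp only [Nat.add_sub_cancel, Nat.mul_zero, Nat.add_zero]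
        exact le_of_eq (Nat.mul_comm _ _)

/-- Saturation for Markov–Pell polynomials: for `k ≥ 1`, writing
`R (2k+1) = Σ A_{i,j} x^(2i) y^(2j) z^(2(2k-i-j))` with `i, j ≥ 0`, `i + j ≤ 2k`,
one has `A_{i,j} > 0` iff `(k+1)·i + k·j ≥ k·(k+1)`. -/
theorem pell_saturation (k : ℕ) (hk : 1 ≤ k) (i j : ℕ) (hij : i + j ≤ 2 * k) :
    0 < MvPolynomial.coeff
        (Finsupp.single 0 (2 * i) + Finsupp.single 1 (2 * j) +
          Finsupp.single 2 (2 * (2 * k - i - j)))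
        (pellR (2 * k + 1))
      ↔ k * (k + 1) ≤ (k + 1) * i + k * j := by
  have hchar := (AB_char k).1 i j hij
  rw [pellR_eq_map, coeff_map]
  rw [show (Finsupp.single 0 (2 * i) + Finsupp.single 1 (2 * j) +
      Finsupp.single 2 (2 * (2 * k - i - j))) = mon i j (2*k - i - j) from rfl]
  rw [show MvPolynomial.coeff (mon i j (2*k - i - j)) (pellN (2*k+1)) = A k i j from rfl]
  rw [show ((Nat.castRingHom ℤ) (A k i j) : ℤ) = ((A k i j : ℕ) : ℤ) from rfl]
  rw [Int.natCast_pos, Nat.pos_iff_ne_zero]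
  exact hchar
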